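/- arXiv:2002.07518 — 3 statements merged into one kernel-verified Lean document; each statement's English description precedes it below -/
import Mathlib

section
/- (Edge deletion reduces noise ratio) Let a graph have m edges of which a fraction α ∈ (0,1) are inter-class edges, and let a classifier over c classes satisfy the symmetric error model with accuracy p. After keeping exactly the edges whose endpoints receive the same predicted label, the expected number of kept inter-class edges is m_r = αm·(2p(1-p)/(c-1) + (c-2)(1-p)^2/(c-1)^2) and of kept intra-class edges is m_a = (1-α)m·(p^2 + (1-p)^2/(c-1)). If p > 2/(c+1) and 0 < p < 1, then m_r/(m_r + m_a) < α. -/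
/-- Edge deletion reduces the noise ratio: with `m_r` the expected number of
kept inter-class edges and `m_a` the expected number of kept intra-class
edges, if `p > 2/(c+1)` and `0 < p < 1` then `m_r/(m_r + m_a) < α`. -/
theorem edge_deletion_reduces_noise (c : ℕ) (hc : 2 ≤ c) (m α p : ℝ)
    (hm : 0 < m) (hα0 : 0 < α) (hα1 : α < 1) (hp0 : 0 < p) (hp1 : p < 1)
    (hp : p > 2 / ((c : ℝ) + 1))
    (m_r m_a : ℝ)
    (hmr : m_r = α * m * (2 * p * (1 - p) / ((c : ℝ) - 1)
      + ((c : ℝ) - 2) * (1 - p) ^ 2 / ((c : ℝ) - 1) ^ 2))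
    (hma : m_a = (1 - α) * m * (p ^ 2 + (1 - p) ^ 2 / ((c : ℝ) - 1))) :
    m_r / (m_r + m_a) < α := by
  have hC : (2:ℝ) ≤ (c:ℝ) := by exact_mod_cast hc
  set C := (c:ℝ) with hCdef
  have hC1 : 0 < C - 1 := by linarith
  have hC1' : (C - 1) ≠ 0 := ne_of_gt hC1
  have hpc : 1 < p * C := by
    have h2 : 2 < p * (C + 1) := by
      rw [gt_iff_lt, div_lt_iff₀ (by linarith)] at hp
      linarith
    nlinarith
  set q := 2 * p * (1 - p) / (C - 1) + (C - 2) * (1 - p) ^ 2 / (C - 1) ^ 2 with hqdef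
  set r := p ^ 2 + (1 - p) ^ 2 / (C - 1) with hrdef
  have hdiff : r - q = (p * C - 1) ^ 2 / (C - 1) ^ 2 := by
    rw [hqdef, hrdef]
    field_simp
    ring
  have hqr : q < r := by
    have hpos : 0 < (p * C - 1) ^ 2 / (C - 1) ^ 2 :=
      div_pos (pow_pos (by linarith) 2) (pow_pos hC1 2)
    have h := hdiff ▸ hpos
    linarith
  have hq0 : 0 < q := by
    have h1 : 0 < 2 * p * (1 - p) / (C - 1) := div_pos (by nlinarith) hC1
    have h2 : 0 ≤ (C - 2) * (1 - p) ^ 2 / (C - 1) ^ 2 := by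
      apply div_nonneg
      · nlinarith
      · positivity
    rw [hqdef]; linarith
  have hr0 : 0 < r := lt_trans hq0 hqr
  have hmr0 : 0 < m_r := by rw [hmr]; positivity
  have hma0 : 0 < m_a := by
    rw [hma]
    have : 0 < 1 - α := by linarith
    positivity
  rw [div_lt_iff₀ (by linarith)]
  rw [hmr, hma]
  nlinarith [mul_lt_mul_of_pos_left hqr (mul_pos (mul_pos hα0 hm) (show (0:ℝ) < 1 - α by linarith))]
end

section
/- Let c ≥ 2, α ∈ (0,1), λ ≥ 0, and p ∈ (0,1). If p > (α + sqrt(α^2 + ((c-1)(1 + cαλ) - cα)(c + α - 1))) / (c + α - 1) (with c + α - 1 > 0 and the discriminant nonnegative), then (1 - p^2) / (1 + (1-p)^2/(c-1) - cλ) < α, provided 1 + (1-p)^2/(c-1) - cλ > 0. -/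
/-- Key inequality in the edge-addition theorem: if
`p > (α + √(α² + ((c-1)(1+cαλ) - cα)(c+α-1)))/(c+α-1)` then
`(1-p²)/(1 + (1-p)²/(c-1) - cλ) < α`. -/
theorem edge_addition_key_inequality (c : ℕ) (hc : 2 ≤ c) (α lam p : ℝ)
    (hα0 : 0 < α) (hα1 : α < 1) (hlam : 0 ≤ lam) (hp0 : 0 < p) (hp1 : p < 1)
    (hca : (c : ℝ) + α - 1 > 0)
    (hdisc : 0 ≤ α ^ 2 + (((c : ℝ) - 1) * (1 + (c : ℝ) * α * lam)
      - (c : ℝ) * α) * ((c : ℝ) + α - 1))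
    (hden : 1 + (1 - p) ^ 2 / ((c : ℝ) - 1) - (c : ℝ) * lam > 0)
    (hp : p > (α + Real.sqrt (α ^ 2 + (((c : ℝ) - 1) * (1 + (c : ℝ) * α * lam)
      - (c : ℝ) * α) * ((c : ℝ) + α - 1))) / ((c : ℝ) + α - 1)) :
    (1 - p ^ 2) / (1 + (1 - p) ^ 2 / ((c : ℝ) - 1) - (c : ℝ) * lam) < α := by
  have hc1 : (1:ℝ) ≤ (c:ℝ) - 1 := by
    have : (2:ℝ) ≤ (c:ℝ) := by exact_mod_cast hc
    linarith
  have hc0 : (0:ℝ) < (c:ℝ) - 1 := by linarith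
  set D := α ^ 2 + (((c : ℝ) - 1) * (1 + (c : ℝ) * α * lam)
      - (c : ℝ) * α) * ((c : ℝ) + α - 1) with hD
  have hs : Real.sqrt D ^ 2 = D := Real.sq_sqrt hdisc
  have hsn : 0 ≤ Real.sqrt D := Real.sqrt_nonneg _
  have hkey : p * ((c:ℝ) + α - 1) > α + Real.sqrt D := by
    rw [gt_iff_lt, div_lt_iff₀ hca] at hp
    linarith
  have h2 : (p * ((c:ℝ) + α - 1) - α) ^ 2 > D := by
    nlinarith [hkey, hs, hsn]
  have hquad : ((c:ℝ) + α - 1) * p ^ 2 - 2 * α * p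
      - (((c:ℝ) - 1) * (1 + (c:ℝ) * α * lam) - (c:ℝ) * α) > 0 := by
    rw [hD] at h2
    nlinarith [h2, hca]
  rw [div_lt_iff₀ hden]
  have hdiv : (1 - p) ^ 2 / ((c:ℝ) - 1) * ((c:ℝ) - 1) = (1 - p) ^ 2 :=
    div_mul_cancel₀ _ (ne_of_gt hc0)
  nlinarith [hquad, hdiv, hc0, mul_pos hα0 hc0]
end

section
/- (Two models beat one: train set accuracy) Let c ≥ 2, 1/2 < p < 1, and p ≤ β ≤ 1 with cpβ + 1 − 2p > 0. Then q = (c-1)pβ / (cpβ + 1 − 2p) ≥ p. -/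
/-- Two models beat one: if `1/2 < p < 1` and `p ≤ β ≤ 1` with
`cpβ + 1 − 2p > 0`, then `q = (c-1)pβ/(cpβ + 1 − 2p) ≥ p`. -/
theorem two_models_beat_one (c : ℕ) (hc : 2 ≤ c) (p β : ℝ)
    (hp0 : 1 / 2 < p) (hp1 : p < 1) (hβ0 : p ≤ β) (hβ1 : β ≤ 1)
    (hden : (c : ℝ) * p * β + 1 - 2 * p > 0) :
    ((c : ℝ) - 1) * p * β / ((c : ℝ) * p * β + 1 - 2 * p) ≥ p := by
  rw [ge_iff_le, le_div_iff₀ hden]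
  have hc' : (2 : ℝ) ≤ c := by exact_mod_cast hc
  have hp : (0:ℝ) < p := by linarith
  have key : 1 - 2 * p ≤ β * ((c:ℝ) - 1 - c * p) := by
    rcases le_or_gt 0 ((c:ℝ) - 1 - c * p) with h | h
    · nlinarith [mul_nonneg (by linarith : (0:ℝ) ≤ β) h]
    · nlinarith [mul_nonneg (by linarith : (0:ℝ) ≤ 1 - β) (by linarith : (0:ℝ) ≤ c * p - (c:ℝ) + 1)]
  nlinarith [mul_le_mul_of_nonneg_left key hp.le]
end
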